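/- Let a = (a_1,…,a_l) be a strictly increasing sequence of positive integers, and red(a) the subsequence obtained by deleting the entries of rem(a). Then red(a) is a symplectic column, i.e., its j-th entry is at least 2j−1 for all j. -/

import Mathlib

/-- The removal subword `rem a` of a column `a = (a_1, …, a_l)` (written 0-indexed as a
list): `rem a = []` if `l ≤ 1`; if `l ≥ 2`, `a_l` is even, `a_{l-1} = a_l − 1` and
`a_l < 2l − |rem (a_1,…,a_{l-2})| − 1`, then `rem a = rem (a_1,…,a_{l-2}) ++ [a_{l-1}, a_l]`;
otherwise `rem a = rem (a_1,…,a_{l-1})`. -/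
def rem (a : List ℕ) : List ℕ :=
  if a.length ≤ 1 then []
  else
    if a.getLast! % 2 = 0 ∧ a.dropLast.getLast! + 1 = a.getLast! ∧
        a.getLast! + (rem a.dropLast.dropLast).length + 1 < 2 * a.length then
      rem a.dropLast.dropLast ++ [a.dropLast.getLast!, a.getLast!]
    else
      rem a.dropLast
termination_by a.length
decreasing_by
  all_goals (simp [List.length_dropLast]; omega)

/-- `red a` is obtained from `a` by deleting the entries of `rem a`. -/
def red (a : List ℕ) : List ℕ := a.filter (fun x => decide (x ∉ rem a))

/-!
Induct on `a`, peeling off its last two entries `x < y`. If `(x, y)` is removed, then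
`red (b ++ [x, y]) = red b`; otherwise `y` is appended to `red (b ++ [x])`, at position
`k = |red (b ++ [x])|`. The last entry of `red (b ++ [x])` is at least `2k - 1` and at most `x < y`,
so `y ≥ 2k`; and `y = 2k` would force `x = 2k - 1 = y - 1` with `y` even, while
`|rem b| ≤ |rem (b ++ [x])| = |b| + 1 - k` makes the length condition for removing `(x, y)` hold.
-/

theorem List.reverseRecOn₂ {α : Type*} {motive : List α → Prop} (nil : motive [])
    (singleton : ∀ x, motive [x])
    (append_pair : ∀ l x y, motive l → motive (l ++ [x]) → motive (l ++ [x, y])) :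
    ∀ l, motive l := by
  suffices h : ∀ l, motive l ∧ ∀ x, motive (l ++ [x]) from fun l => (h l).1
  intro l
  induction l using List.reverseRecOn with
  | nil => exact ⟨nil, singleton⟩
  | append_singleton l x ih =>
    refine ⟨ih.2 x, fun y => ?_⟩
    simpa using append_pair l x y ih.1 (ih.2 x)

lemma rem_append_pair (b : List ℕ) (x y : ℕ) :
    rem (b ++ [x, y]) =
      if y % 2 = 0 ∧ x + 1 = y ∧ y + (rem b).length + 1 < 2 * (b.length + 2) then
        rem b ++ [x, y]
      else rem (b ++ [x]) := by
  have h : b ++ [x, y] = b ++ [x] ++ [y] := by simp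
  rw [rem, h]
  simp

lemma rem_sublist (a : List ℕ) : (rem a).Sublist a := by
  induction a using List.reverseRecOn₂ with
  | nil => simp [rem]
  | singleton x => simp [rem]
  | append_pair b x y hb hbx =>
    rw [rem_append_pair]
    split
    · exact hb.append_right _
    · exact hbx.trans (by simp)

lemma length_rem_append_singleton_bounds (b : List ℕ) : ∀ x,
    (rem b).length ≤ (rem (b ++ [x])).length ∧ (rem (b ++ [x])).length ≤ (rem b).length + 2 := by
  induction b using List.reverseRecOn with
  | nil => simp [rem]
  | append_singleton b w ih =>
    intro x
    obtain ⟨hle, hge⟩ := ih w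
    rw [List.append_assoc, List.singleton_append, rem_append_pair]
    split
    · simp; omega
    · simp

lemma length_red_add_length_rem {a : List ℕ} (ha : a.Nodup) :
    (red a).length + (rem a).length = a.length := by
  have hrem := rem_sublist a
  have hperm : (a.filter (· ∈ rem a)).Perm (rem a) :=
    (List.perm_ext_iff_of_nodup (ha.filter _) (hrem.nodup ha)).2 fun z => by
      simpa using fun hz => hrem.subset hz
  rw [a.length_eq_length_filter_add (· ∈ rem a), ← hperm.length_eq, red]
  simp [Nat.add_comm]

lemma red_append_pair_of_removal {b : List ℕ} {x y : ℕ} (hb : ∀ z ∈ b, z < x) (hxy : x < y)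
    (hrem : rem (b ++ [x, y]) = rem b ++ [x, y]) : red (b ++ [x, y]) = red b := by
  rw [red, red, hrem, List.filter_append]
  have hnil : [x, y].filter (fun z => decide (z ∉ rem b ++ [x, y])) = [] := by simp
  rw [hnil, List.append_nil]
  refine List.filter_congr fun z hz => ?_
  have := hb z hz
  grind

lemma red_append_pair_of_not_removal {b : List ℕ} {x y : ℕ} (hy : y ∉ b ++ [x])
    (hrem : rem (b ++ [x, y]) = rem (b ++ [x])) : red (b ++ [x, y]) = red (b ++ [x]) ++ [y] := by
  have hy' : y ∉ rem (b ++ [x]) := fun h => hy ((rem_sublist _).subset h)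
  have h : b ++ [x, y] = b ++ [x] ++ [y] := by simp
  rw [red, red, hrem, h, List.filter_append]
  simp [hy']

-- The paper's condition `b_j ≥ 2j - 1`, with 0-based indices.
def IsSymplectic (l : List ℕ) : Prop :=
  ∀ j (h : j < l.length), 2 * j + 1 ≤ l[j]

lemma isSymplectic_append_singleton {l : List ℕ} {y : ℕ} :
    IsSymplectic (l ++ [y]) ↔ IsSymplectic l ∧ 2 * l.length + 1 ≤ y := by
  refine ⟨fun h => ⟨fun j hj => ?_, ?_⟩, fun ⟨hl, hy⟩ j hj => ?_⟩
  · have := h j (by simp; omega)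
    rwa [List.getElem_append_left hj] at this
  · simpa using h l.length (by simp)
  · rw [List.length_append, List.length_singleton] at hj
    rcases Nat.lt_or_ge j l.length with hj' | hj'
    · rw [List.getElem_append_left hj']; exact hl j hj'
    · rw [List.getElem_concat_length (by omega)]; omega

lemma IsSymplectic.two_mul_length_le {l : List ℕ} (hl : IsSymplectic l) (hne : l ≠ [])
    {x : ℕ} (hx : ∀ z ∈ l, z ≤ x) : 2 * l.length ≤ x + 1 := by
  have hlen : l.length - 1 < l.length := by
    have := List.length_pos_of_ne_nil hne; omega
  have := hl _ hlen
  have := hx _ (List.getElem_mem hlen)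
  omega

lemma two_mul_length_red_add_one_le {b : List ℕ} {x y : ℕ} (hbx : (b ++ [x]).Pairwise (· < ·))
    (hxy : x < y) (hy : 1 ≤ y) (hred : IsSymplectic (red (b ++ [x])))
    (hc : ¬(y % 2 = 0 ∧ x + 1 = y ∧ y + (rem b).length + 1 < 2 * (b.length + 2))) :
    2 * (red (b ++ [x])).length + 1 ≤ y := by
  by_cases hne : red (b ++ [x]) = []
  · simpa [hne] using hy
  have hle_x : ∀ z ∈ red (b ++ [x]), z ≤ x := fun z hz => by
    have hz : z ∈ b ++ [x] := List.mem_of_mem_filter hz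
    rcases List.mem_append.1 hz with hz | hz
    · exact ((List.pairwise_append.1 hbx).2.2 z hz x (List.mem_singleton_self x)).le
    · exact (List.mem_singleton.1 hz).le
  have hk := hred.two_mul_length_le hne hle_x
  have hlen := length_red_add_length_rem hbx.nodup
  have hmono := (length_rem_append_singleton_bounds b x).1
  simp only [List.length_append, List.length_singleton] at hlen
  by_contra
  exact hc ⟨by omega, by omega, by omega⟩

theorem isSymplectic_red {a : List ℕ} (hs : a.Pairwise (· < ·)) (hpos : ∀ x ∈ a, 1 ≤ x) :
    IsSymplectic (red a) := by
  induction a using List.reverseRecOn₂ with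
  | nil => simp [IsSymplectic, red]
  | singleton x => simpa [IsSymplectic, red, rem, Nat.succ_le_iff] using hpos
  | append_pair b x y ihb ihbx =>
    have hsub : (b ++ [x]).Sublist (b ++ [x, y]) := by simp
    have hbx : (b ++ [x]).Pairwise (· < ·) := hs.sublist hsub
    obtain ⟨hb, hxy, hbxy⟩ : b.Pairwise (· < ·) ∧ x < y ∧ ∀ z ∈ b, z < x ∧ z < y := by
      simpa [List.pairwise_append] using hs
    by_cases hc : y % 2 = 0 ∧ x + 1 = y ∧ y + (rem b).length + 1 < 2 * (b.length + 2)
    · rw [red_append_pair_of_removal (fun z hz => (hbxy z hz).1) hxy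
        (by rw [rem_append_pair, if_pos hc])]
      exact ihb hb fun z hz => hpos z (by simp [hz])
    · rw [red_append_pair_of_not_removal (by
        simp only [List.mem_append, List.mem_singleton, not_or]
        exact ⟨fun h => (hbxy y h).2.false, hxy.ne'⟩)
        (by rw [rem_append_pair, if_neg hc])]
      have hred := ihbx hbx fun z hz => hpos z (hsub.subset hz)
      exact isSymplectic_append_singleton.2
        ⟨hred, two_mul_length_red_add_one_le hbx hxy (hpos y (by simp)) hred hc⟩

/-- For a strictly increasing sequence of positive integers `a`, the reduction `red a`
is a symplectic column: its `j`-th entry (1-indexed) is at least `2j−1`, i.e. 0-indexed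
`(red a)[j] ≥ 2j+1`. -/
theorem stmt_14 (a : List ℕ) (hsorted : a.Pairwise (· < ·)) (hpos : ∀ x ∈ a, 1 ≤ x) :
    ∀ j (h : j < (red a).length), 2 * j + 1 ≤ (red a).get ⟨j, h⟩ :=
  isSymplectic_red hsorted hpos
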